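/- arXiv:2311.17886 — 3 statements merged into one kernel-verified Lean document; each statement's English description precedes it below -/
import Mathlib

section
/- Let M ⊆ ℝ^d and suppose that the set Inc(M) of all paths X : [0,T] → ℝ^d with increment X_T − X₀ ∈ M is a path variety, i.e. Inc(M) = 𝒱(W) for some W ⊆ T(ℝ^d). Then M is a real algebraic subset of ℝ^d, i.e. M is the common zero set of a family of polynomials in ℝ[x₁,…,x_d]. -/
open scoped BigOperators TensorProduct

namespace PathVarieties

/-- Words over an alphabet `α`; the letters `{1,…,d}` of `ℝ^d` correspond to `α = Fin d`. -/
abbrev Word (α : Type*) := List α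

/-- The tensor algebra `T(ℝ^d)`, identified with the free real vector space on words. -/
abbrev TA (α : Type*) := Word α →₀ ℝ

/-- The list of all (riffle) shuffles of two words. -/
def shuffles {α : Type*} : Word α → Word α → List (Word α)
  | [], v => [v]
  | a :: u, [] => [a :: u]
  | a :: u, b :: v =>
      ((shuffles u (b :: v)).map (a :: ·)) ++ ((shuffles (a :: u) v).map (b :: ·))
termination_by u v => u.length + v.length
decreasing_by all_goals (simp only [List.length_cons]; omega)

/-- Shuffle product of two words, as an element of `T(ℝ^d)`. -/
noncomputable def shw {α : Type*} (u v : Word α) : TA α :=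
  ((shuffles u v).map fun w => Finsupp.single w (1 : ℝ)).sum

/-- The shuffle product `⧢` on `T(ℝ^d)`, the bilinear extension of the shuffle of words. -/
noncomputable def sh {α : Type*} (x y : TA α) : TA α :=
  x.sum fun u cu => y.sum fun v cv => (cu * cv) • shw u v

/-- Right halfshuffle `u ≻ v` of words (`v` nonempty): shuffle `u` with `v` minus its
last letter, then append the last letter of `v`.  (This is the unique bilinear operation
with `w ≻ a = wa` and `w ≻ (va) = (w≻v + v≻w)a`.) -/
noncomputable def rshw {α : Type*} (u v : Word α) : TA α :=
  ((shuffles u v.dropLast).map fun w =>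
    Finsupp.single (w ++ v.drop (v.length - 1)) (1 : ℝ)).sum

/-- Right halfshuffle `≻` on `T^{≥1}(ℝ^d)`, extended bilinearly. -/
noncomputable def rsh {α : Type*} (x y : TA α) : TA α :=
  x.sum fun u cu => y.sum fun v cv => (cu * cv) • rshw u v

/-- Left halfshuffle `u ≺ v` of words (`u` nonempty): the first letter of `u` followed by
the shuffle of the rest of `u` with `v`.  (This is the unique bilinear operation with
`a ≺ w = aw` and `(av) ≺ w = a(w≺v + v≺w)`.) -/
noncomputable def lshw {α : Type*} (u v : Word α) : TA α :=
  ((shuffles u.tail v).map fun w => Finsupp.single (u.take 1 ++ w) (1 : ℝ)).sum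

/-- Left halfshuffle `≺` on `T^{≥1}(ℝ^d)`, extended bilinearly. -/
noncomputable def lsh {α : Type*} (x y : TA α) : TA α :=
  x.sum fun u cu => y.sum fun v cv => (cu * cv) • lshw u v

/-- The antipode `𝒜`, with `𝒜(i₁⋯iₙ) = (−1)ⁿ iₙ⋯i₁`. -/
noncomputable def antipode {α : Type*} (x : TA α) : TA α :=
  x.sum fun w c => Finsupp.single w.reverse (((-1 : ℝ) ^ w.length) * c)

/-- Helper for `Λ_B`: value on a reversed word. -/
noncomputable def lamRev {α β : Type*} (B : α → TA β) : Word α → TA β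
  | [] => Finsupp.single [] 1
  | [i] => B i
  | i :: w => rsh (lamRev B w) (B i)

/-- `Λ_B` on a word: `Λ_B e = e`, `Λ_B i = B i`, `Λ_B (w·i) = (Λ_B w) ≻ (Λ_B i)`. -/
noncomputable def lamW {α β : Type*} (B : α → TA β) (w : Word α) : TA β :=
  lamRev B w.reverse

/-- The linear map `Λ_B : T(ℝ^t) → T(ℝ^d)` induced by `B` on letters. -/
noncomputable def Lam {α β : Type*} (B : α → TA β) (x : TA α) : TA β :=
  x.sum fun w c => c • lamW B w

/-- `splitEmb e j n w = Σ_{w = u₁⋯uₙ} e_j(u₁) ⧢ e_{j+1}(u₂) ⧢ ⋯ ⧢ e_{j+n−1}(uₙ)`,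
the sum over all splittings of `w` into `n` consecutive (possibly empty) factors,
each factor relabelled letterwise by `e`. -/
noncomputable def splitEmb {α β : Type*} (e : ℕ → α → β) : ℕ → ℕ → Word α → TA β
  | _, 0, w => if w.isEmpty then Finsupp.single ([] : Word β) (1 : ℝ) else 0
  | j, k + 1, w => ∑ m ∈ Finset.range (w.length + 1),
      sh (Finsupp.single ((w.take m).map (e j)) (1 : ℝ)) (splitEmb e (j + 1) k (w.drop m))

/-- `Σ_{x=uv} f(u)·v`: deconcatenate, evaluate the functional `f` on prefixes. -/
noncomputable def leftAct {α : Type*} (f : Word α → ℝ) (x : TA α) : TA α :=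
  x.sum fun w c => c • ∑ k ∈ Finset.range (w.length + 1),
    f (w.take k) • Finsupp.single (w.drop k) (1 : ℝ)

/-- `Σ_{x=uv} u·f(v)`: deconcatenate, evaluate the functional `f` on suffixes. -/
noncomputable def rightAct {α : Type*} (f : Word α → ℝ) (x : TA α) : TA α :=
  x.sum fun w c => c • ∑ k ∈ Finset.range (w.length + 1),
    f (w.drop k) • Finsupp.single (w.take k) (1 : ℝ)

/-- A raw path: a time horizon `T` together with a map `ℝ → ℝ^α`
(only the restriction to `[0,T]` is relevant). -/
structure RawPath (α : Type*) where
  T : ℝ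
  toFun : ℝ → α → ℝ

/-- A path: positive time horizon, continuous on `[0,T]` and piecewise continuously
differentiable there (witnessed by a partition `0 = τ₀ < τ₁ < ⋯ < τₙ = T`). -/
def IsPath {α : Type*} (X : RawPath α) : Prop :=
  0 < X.T ∧ (∀ i, ContinuousOn (fun t => X.toFun t i) (Set.Icc 0 X.T)) ∧
    ∃ (n : ℕ) (τ : Fin (n + 1) → ℝ), StrictMono τ ∧ τ 0 = 0 ∧ τ (Fin.last n) = X.T ∧
      ∀ (k : Fin n) (i : α), ContDiffOn ℝ 1 (fun t => X.toFun t i)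
        (Set.Icc (τ k.castSucc) (τ k.succ))

/-- Iterated integrals, by recursion on the reversed word:
`sigRev X (i :: w) t = ∫₀ᵗ ⟨σ(X)ₛ, w.reverse⟩ dX⁽ⁱ⁾(s)`. -/
noncomputable def sigRev {α : Type*} (X : ℝ → α → ℝ) : Word α → ℝ → ℝ
  | [], _ => 1
  | i :: w, t => ∫ s in (0 : ℝ)..t, sigRev X w s * deriv (fun u => X u i) s

/-- `⟨σ(X)_t, w⟩`, the iterated-integrals signature of `X` stopped at time `t`. -/
noncomputable def sigUpTo {α : Type*} (X : RawPath α) (t : ℝ) (w : Word α) : ℝ :=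
  sigRev X.toFun w.reverse t

/-- `⟨σ(X), w⟩`, the iterated-integrals signature of the path `X` at a word `w`. -/
noncomputable def sig {α : Type*} (X : RawPath α) (w : Word α) : ℝ :=
  sigUpTo X X.T w

/-- Pairing of a word-indexed functional with an element of `T(ℝ^d)`. -/
noncomputable def pairF {α : Type*} (f : Word α → ℝ) (x : TA α) : ℝ :=
  x.sum fun w c => c * f w

/-- `⟨σ(X), x⟩` for a tensor `x ∈ T(ℝ^d)` (linear in `x`). -/
noncomputable def pair {α : Type*} (X : RawPath α) (x : TA α) : ℝ :=
  Finsupp.linearCombination ℝ (sig X) x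

/-- The path variety `𝒱(W)` of all paths whose signature kills every element of `W`. -/
def V {α : Type*} (W : Set (TA α)) : Set (RawPath α) :=
  {X | IsPath X ∧ ∀ x ∈ W, pair X x = 0}

/-- `ℐ(M)`, the space of tensors killed by the signature of every path in `M`. -/
noncomputable def Idl {α : Type*} (M : Set (RawPath α)) : Submodule ℝ (TA α) :=
  ⨅ X ∈ M, LinearMap.ker (Finsupp.linearCombination ℝ (sig X))

/-- Concatenation `X ⊔ Y` of paths. -/
noncomputable def concat {α : Type*} (X Y : RawPath α) : RawPath α where
  T := X.T + Y.T
  toFun := fun t i =>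
    if t ≤ X.T then X.toFun t i else Y.toFun (t - X.T) i + X.toFun X.T i - Y.toFun 0 i

/-- Time reversal `⟵X`. -/
def timeRev {α : Type*} (X : RawPath α) : RawPath α :=
  ⟨X.T, fun t i => X.toFun (X.T - t) i⟩

/-- `concatIter X n = X^{⊔(n+1)}`. -/
noncomputable def concatIter {α : Type*} (X : RawPath α) : ℕ → RawPath α
  | 0 => X
  | n + 1 => concat (concatIter X n) X

/-- `X^{⊔n}`, the `n`-fold concatenation of `X` with itself (intended for `n ≥ 1`). -/
noncomputable def concatPow {α : Type*} (X : RawPath α) (n : ℕ) : RawPath α :=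
  concatIter X (n - 1)

/-- `concatFold f k = f 0 ⊔ f 1 ⊔ ⋯ ⊔ f k`. -/
noncomputable def concatFold {α : Type*} (f : ℕ → RawPath α) : ℕ → RawPath α
  | 0 => f 0
  | k + 1 => concat (concatFold f k) (f (k + 1))

/-- The deconcatenation coproduct `Δ : T(ℝ^d) → T(ℝ^d) ⊗ T(ℝ^d)`,
`Δw = Σ_{w=uv} u ⊗ v`. -/
noncomputable def deconc {α : Type*} (x : TA α) : TensorProduct ℝ (TA α) (TA α) :=
  x.sum fun w c => c • ∑ k ∈ Finset.range (w.length + 1),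
    (Finsupp.single (w.take k) (1 : ℝ)) ⊗ₜ[ℝ] (Finsupp.single (w.drop k) (1 : ℝ))


/-- The linear path `t ↦ t • v` on `[0,1]`. -/
noncomputable def linPath {d : ℕ} (v : Fin d → ℝ) : RawPath (Fin d) :=
  ⟨1, fun t i => t * v i⟩

lemma linPath_isPath {d : ℕ} (v : Fin d → ℝ) : IsPath (linPath v) := by
  refine ⟨one_pos, fun i => (continuous_id.mul continuous_const).continuousOn,
    1, ![0, 1], ?_, rfl, rfl, ?_⟩
  · intro a b h
    fin_cases a <;> fin_cases b <;> simp_all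
  · intro k i
    exact (contDiff_id.mul contDiff_const).contDiffOn

lemma sigRev_linPath {d : ℕ} (v : Fin d → ℝ) (w : Word (Fin d)) (t : ℝ) :
    sigRev (linPath v).toFun w t = (w.map v).prod * t ^ w.length / Nat.factorial w.length := by
  induction w generalizing t with
  | nil => simp [sigRev]
  | cons i w ih =>
    have hint : (fun s => sigRev (linPath v).toFun w s * deriv (fun u => (linPath v).toFun u i) s)
        = fun s => ((w.map v).prod * v i / Nat.factorial w.length) * s ^ w.length := by
      funext s
      have hd : deriv (fun u => (linPath v).toFun u i) s = v i := by
        simp [linPath]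
      rw [ih, hd]; ring
    rw [sigRev, hint, intervalIntegral.integral_const_mul, integral_pow]
    have h1 : (Nat.factorial w.length : ℝ) ≠ 0 := by positivity
    have h2 : ((w.length : ℝ) + 1) ≠ 0 := by positivity
    simp only [List.map_cons, List.prod_cons, List.length_cons, Nat.factorial_succ]
    push_cast
    field_simp
    ring

lemma sig_linPath {d : ℕ} (v : Fin d → ℝ) (w : Word (Fin d)) :
    sig (linPath v) w = (w.map v).prod / Nat.factorial w.length := by
  rw [sig, sigUpTo, sigRev_linPath]
  rw [show ((linPath v).T) = 1 from rfl, List.length_reverse, List.map_reverse, List.prod_reverse, one_pow, mul_one]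

/-- The polynomial `v ↦ ⟨σ(t ↦ tv), x⟩`. -/
noncomputable def polyOf {d : ℕ} (x : TA (Fin d)) : MvPolynomial (Fin d) ℝ :=
  x.sum fun w c => MvPolynomial.C (c / Nat.factorial w.length) * (w.map MvPolynomial.X).prod

lemma eval_polyOf {d : ℕ} (x : TA (Fin d)) (v : Fin d → ℝ) :
    MvPolynomial.eval v (polyOf x) = pair (linPath v) x := by
  rw [polyOf, pair, Finsupp.linearCombination_apply, map_finsuppSum]
  refine Finsupp.sum_congr fun w hw => ?_
  rw [map_mul, MvPolynomial.eval_C, map_list_prod]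
  simp only [List.map_map]
  have : (MvPolynomial.eval v) ∘ (MvPolynomial.X : Fin d → MvPolynomial (Fin d) ℝ) = v := by
    funext i; simp
  rw [this, smul_eq_mul, sig_linPath]
  ring

lemma linPath_incr {d : ℕ} (v : Fin d → ℝ) :
    (fun i => (linPath v).toFun (linPath v).T i - (linPath v).toFun 0 i) = v := by
  funext i; simp [linPath]

/-- If the set of paths with increment in `M ⊆ ℝ^d` is a path variety,
then `M` is a real algebraic subset of `ℝ^d`. -/
theorem statement1 {d : ℕ} (M : Set (Fin d → ℝ))
    (hvar : ∃ W : Set (TA (Fin d)),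
      {X : RawPath (Fin d) | IsPath X ∧ (fun i => X.toFun X.T i - X.toFun 0 i) ∈ M} = V W) :
    ∃ P : Set (MvPolynomial (Fin d) ℝ),
      M = {v : Fin d → ℝ | ∀ p ∈ P, MvPolynomial.eval v p = 0} := by
  obtain ⟨W, hW⟩ := hvar
  refine ⟨polyOf '' W, Set.ext fun v => ?_⟩
  constructor
  · intro hv
    rintro p ⟨x, hx, rfl⟩
    have hmem : linPath v ∈ {X : RawPath (Fin d) | IsPath X ∧
        (fun i => X.toFun X.T i - X.toFun 0 i) ∈ M} := by
      refine ⟨linPath_isPath v, ?_⟩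
      rw [linPath_incr]; exact hv
    rw [hW] at hmem
    rw [eval_polyOf]
    exact hmem.2 x hx
  · intro hv
    have hmem : linPath v ∈ V W := by
      refine ⟨linPath_isPath v, fun x hx => ?_⟩
      rw [← eval_polyOf]
      exact hv _ ⟨x, hx, rfl⟩
    rw [← hW] at hmem
    have := hmem.2
    rwa [linPath_incr] at this

end PathVarieties
end

section
/- In T(ℝ^d) with d ≥ 1, the smallest subspace I of T^{≥1}(ℝ^d) that contains the letter 1 and satisfies x≻y ∈ I and y≻x ∈ I for all x ∈ I and y ∈ T^{≥1}(ℝ^d) (the ≻-ideal generated by the letter 1) equals the linear span of all words containing the letter 1. -/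
open scoped BigOperators TensorProduct

namespace PathVarieties

/-
Every word occurring in `u ≻ v` is a rearrangement of `uv` ending in the last letter of `v`,
so the words containing the letter `z` span a `≻`-ideal. Conversely every such word `p z s`
is generated from `z`: first `p ≻ z = p z`, then letters of `s` are appended one at a time
by `w ≻ a = w a`.
-/

section Halfshuffle

variable {α : Type*}

theorem perm_append_of_mem_shuffles {u v w : Word α} (hw : w ∈ shuffles u v) :
    w.Perm (u ++ v) := by
  induction u, v using shuffles.induct generalizing w with
  | case1 v => simp_all [shuffles]
  | case2 a u => simp_all [shuffles]
  | case3 a u b v ih₁ ih₂ =>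
    rw [shuffles] at hw
    rcases List.mem_append.1 hw with h | h <;> obtain ⟨s, hs, rfl⟩ := List.mem_map.1 h
    · exact (ih₁ hs).cons a
    · exact ((ih₂ hs).cons b).trans List.perm_middle.symm

theorem shuffles_nil_right (u : Word α) : shuffles u [] = [u] := by
  cases u <;> rw [shuffles]

theorem rshw_singleton (u : Word α) (a : α) :
    rshw u [a] = Finsupp.single (u ++ [a]) 1 := by
  simp [rshw, shuffles_nil_right]

theorem rsh_single_single (u v : Word α) :
    rsh (Finsupp.single u (1 : ℝ)) (Finsupp.single v (1 : ℝ)) = rshw u v := by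
  rw [rsh, Finsupp.sum_single_index, Finsupp.sum_single_index] <;> simp

theorem rsh_mem {S : Submodule ℝ (TA α)} {x y : TA α}
    (h : ∀ u ∈ x.support, ∀ v ∈ y.support, rshw u v ∈ S) : rsh x y ∈ S :=
  Submodule.sum_mem _ fun u hu => Submodule.sum_mem _ fun v hv =>
    Submodule.smul_mem _ _ (h u hu v hv)

theorem rshw_mem_supported_of_mem {z : α} {u v : Word α} (hv : v ≠ [])
    (hz : z ∈ u ∨ z ∈ v) : rshw u v ∈ Finsupp.supported ℝ ℝ {w : Word α | z ∈ w} := by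
  obtain ⟨q, b, rfl⟩ := (v.eq_nil_or_concat'.resolve_left hv)
  have hlast : (q ++ [b]).drop ((q ++ [b]).length - 1) = [b] := by simp
  rw [rshw, List.dropLast_concat, hlast]
  refine list_sum_mem fun x hx => ?_
  obtain ⟨s, hs, rfl⟩ := List.mem_map.1 hx
  refine Finsupp.single_mem_supported ℝ 1 ?_
  have hperm := (perm_append_of_mem_shuffles hs).mem_iff (a := z)
  simp only [Set.mem_ofPred_eq, List.mem_append, List.mem_singleton] at hz hperm ⊢
  tauto

end Halfshuffle

/-- `J` is a two-sided `≻`-ideal of `T^{≥1}` containing the letter `z`; the condition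
`x [] = 0` encodes `x ∈ T^{≥1}`. -/
def IsRshIdealOf {α : Type*} (z : α) (J : Submodule ℝ (TA α)) : Prop :=
  (∀ x ∈ J, x [] = 0) ∧ Finsupp.single [z] 1 ∈ J ∧
    ∀ x ∈ J, ∀ y : TA α, y [] = 0 → rsh x y ∈ J ∧ rsh y x ∈ J

section RshIdeal

variable {α : Type*} {z : α}

theorem isRshIdealOf_supported_mem :
    IsRshIdealOf z (Finsupp.supported ℝ ℝ {w : Word α | z ∈ w}) := by
  refine ⟨fun x hx => (Finsupp.mem_supported' ℝ x).1 hx [] (by simp),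
    Finsupp.single_mem_supported ℝ 1 (by simp), fun x hx y hy => ⟨?_, ?_⟩⟩
  all_goals
    refine rsh_mem fun u hu v hv => rshw_mem_supported_of_mem ?_ ?_
  · rintro rfl
    exact Finsupp.mem_support_iff.1 hv hy
  · exact Or.inl ((Finsupp.mem_supported ℝ x).1 hx hu)
  · exact List.ne_nil_of_mem ((Finsupp.mem_supported ℝ x).1 hx hv)
  · exact Or.inr ((Finsupp.mem_supported ℝ x).1 hx hv)

theorem IsRshIdealOf.single_append_cons_mem {J : Submodule ℝ (TA α)}
    (hJ : IsRshIdealOf z J) (p s : Word α) : Finsupp.single (p ++ z :: s) (1 : ℝ) ∈ J := by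
  obtain ⟨-, hz, hclosed⟩ := hJ
  induction s using List.reverseRecOn with
  | nil =>
    rcases eq_or_ne p [] with rfl | hp
    · simpa using hz
    · have h := (hclosed _ hz (Finsupp.single p 1) (Finsupp.single_eq_of_ne' hp)).2
      rwa [rsh_single_single, rshw_singleton] at h
  | append_singleton s a ih =>
    have h := (hclosed _ ih (Finsupp.single [a] 1)
      (Finsupp.single_eq_of_ne' (List.cons_ne_nil a []))).1
    rw [rsh_single_single, rshw_singleton] at h
    simpa using h

theorem sInf_isRshIdealOf :
    sInf {J | IsRshIdealOf z J} = Finsupp.supported ℝ ℝ {w : Word α | z ∈ w} := by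
  refine le_antisymm (sInf_le isRshIdealOf_supported_mem) (le_sInf fun J hJ => ?_)
  rw [Finsupp.supported_eq_span_single, Submodule.span_le]
  rintro _ ⟨w, hw, rfl⟩
  obtain ⟨p, s, rfl⟩ := List.append_of_mem hw
  exact hJ.single_append_cons_mem p s

end RshIdeal

/-- In `T(ℝ^d)`, `d ≥ 1`, the smallest subspace of `T^{≥1}(ℝ^d)`
containing the letter `1` and stable under left and right `≻`-multiplication by
`T^{≥1}(ℝ^d)` equals the linear span of all words containing the letter `1`. -/
theorem statement5 {d : ℕ} (hd : 0 < d) :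
    sInf {J : Submodule ℝ (TA (Fin d)) |
        (∀ x ∈ J, x [] = 0) ∧
        Finsupp.single [(⟨0, hd⟩ : Fin d)] 1 ∈ J ∧
        ∀ x ∈ J, ∀ y : TA (Fin d), y [] = 0 → rsh x y ∈ J ∧ rsh y x ∈ J} =
      Submodule.span ℝ {x : TA (Fin d) |
        ∃ w : Word (Fin d), (⟨0, hd⟩ : Fin d) ∈ w ∧ x = Finsupp.single w 1} := by
  refine (sInf_isRshIdealOf (z := (⟨0, hd⟩ : Fin d))).trans ?_
  rw [Finsupp.supported_eq_span_single]
  congr 1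
  ext x
  simp only [Set.mem_image, Set.mem_ofPred_eq, eq_comm]

end PathVarieties
end

section
/- Let d ≥ 2, let X : [0,T] → ℝ^d be a path, and let Q : ℝ^d → ℝ^d be the orthogonal projection onto the hyperplane {x₁ = 0}. Then ⟨σ(X), w⟩ = 0 for every word w containing the letter 1 if and only if σ(X) = σ(QX) as linear functionals on T(ℝ^d), i.e. if and only if σ(X) is the signature of a path contained in the hyperplane {x₁ = 0}. Moreover, ℐ({paths contained in the hyperplane x₁ = 0}) equals exactly the linear span of the words containing the letter 1. -/
open scoped BigOperators TensorProduct

namespace PathVarieties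

/-! The first part and the inclusion of the span in `ℐ` only use that an iterated integral
vanishes as soon as one of its integrators is constant.

For the converse, let `x ∈ ℐ` and let `w₀ = j₀ ⋯ j_{m-1}` be a word avoiding the letter `c`.
The path that moves successively by `v₀, …, v_{m-1}` along the axes `j₀, …, j_{m-1}` lies in
the hyperplane, and by Chen's relation its signature is
`exp(v₀ e_{j₀}) ⊗ ⋯ ⊗ exp(v_{m-1} e_{j_{m-1}})`. Hence `⟨σ, x⟩` is a polynomial in `v` that
vanishes identically, and its coefficient of `v₀ ⋯ v_{m-1}` is the coefficient of `w₀` in `x`. -/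

open Finset Set Filter Topology MeasureTheory

section Signature

variable {α : Type*}

theorem sigRev_congr {F G : ℝ → α → ℝ} :
    ∀ w : Word α, (∀ i ∈ w, ∀ t, F t i = G t i) → sigRev F w = sigRev G w
  | [], _ => rfl
  | i :: w, h => by
    have hw : sigRev F w = sigRev G w :=
      sigRev_congr w fun j hj t => h j (List.mem_cons_of_mem _ hj) t
    have hi : (fun u => F u i) = fun u => G u i := funext fun t => h i List.mem_cons_self t
    funext t
    simp only [sigRev, hw, hi]

theorem sigRev_eq_zero_of_mem {F : ℝ → α → ℝ} {c : α} {T : ℝ}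
    (hF : ∀ t ∈ uIcc 0 T, F t c = 0) :
    ∀ w : Word α, c ∈ w → ∀ t ∈ uIcc 0 T, sigRev F w t = 0
  | i :: w, hw, t, ht => by
    rw [sigRev]
    refine intervalIntegral.integral_zero_ae ?_
    filter_upwards [(Ioo_ae_eq_Icc (a := 0 ⊓ T) (b := 0 ⊔ T)).mem_iff] with s hIoo hs
    have hsT : s ∈ uIcc 0 T := uIcc_subset_uIcc_left ht (uIoc_subset_uIcc hs)
    rcases List.mem_cons.mp hw with rfl | hcw
    · -- the coordinate `c` is constant near interior points, and the endpoints are null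
      have hloc : (fun u => F u c) =ᶠ[𝓝 s] fun _ => 0 :=
        eventually_of_mem (isOpen_Ioo.mem_nhds (hIoo.mpr hsT))
          fun u hu => hF u (Ioo_subset_Icc_self hu)
      rw [hloc.deriv_eq, deriv_const, mul_zero]
    · rw [sigRev_eq_zero_of_mem hF w hcw s hsT, zero_mul]

theorem sig_eq_zero_of_mem {X : RawPath α} {c : α} (hX : ∀ t ∈ uIcc 0 X.T, X.toFun t c = 0)
    {w : Word α} (hw : c ∈ w) : sig X w = 0 :=
  sigRev_eq_zero_of_mem hX w.reverse (List.mem_reverse.mpr hw) X.T right_mem_uIcc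

theorem continuous_sigRev {F : ℝ → α → ℝ} (hF : ∀ i, Continuous (deriv fun t => F t i)) :
    ∀ w : Word α, Continuous (sigRev F w)
  | [] => continuous_const
  | i :: w => intervalIntegral.continuous_primitive
      (fun _ _ => ((continuous_sigRev hF w).mul (hF i)).intervalIntegrable _ _) 0

theorem span_le_Idl_hyperplane (c : α) :
    Submodule.span ℝ {x : TA α | ∃ w : Word α, c ∈ w ∧ x = Finsupp.single w 1} ≤
      Idl {Y : RawPath α | IsPath Y ∧ ∀ t ∈ Icc (0 : ℝ) Y.T, Y.toFun t c = 0} := by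
  rw [Submodule.span_le]
  rintro _ ⟨w, hw, rfl⟩
  simp only [SetLike.mem_coe, Idl, Submodule.mem_iInf, LinearMap.mem_ker,
    Finsupp.linearCombination_single, one_smul]
  rintro Y ⟨hY, hYc⟩
  exact sig_eq_zero_of_mem (by rwa [uIcc_of_le hY.1.le]) hw

end Signature

section Hyperplane

variable {α : Type*} [DecidableEq α]

/-- The projection `QX` of `X` onto the hyperplane `{x_c = 0}`. -/
def hyperplaneProj (c : α) (X : RawPath α) : RawPath α :=
  ⟨X.T, fun t i => if i = c then 0 else X.toFun t i⟩

theorem sig_hyperplaneProj_of_mem {c : α} (X : RawPath α) {w : Word α} (hw : c ∈ w) :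
    sig (hyperplaneProj c X) w = 0 :=
  sig_eq_zero_of_mem (fun _ _ => if_pos rfl) hw

theorem sig_hyperplaneProj_of_not_mem {c : α} (X : RawPath α) {w : Word α} (hw : c ∉ w) :
    sig (hyperplaneProj c X) w = sig X w := by
  refine congrFun (sigRev_congr w.reverse fun i hi t => if_neg ?_) X.T
  rintro rfl
  exact hw (List.mem_reverse.mp hi)

theorem forall_sig_eq_zero_iff_sig_eq_sig_hyperplaneProj (c : α) (X : RawPath α) :
    (∀ w : Word α, c ∈ w → sig X w = 0) ↔ ∀ w, sig X w = sig (hyperplaneProj c X) w := by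
  constructor
  · intro h w
    by_cases hw : c ∈ w
    · rw [h w hw, sig_hyperplaneProj_of_mem X hw]
    · rw [sig_hyperplaneProj_of_not_mem X hw]
  · intro h w hw
    rw [h w, sig_hyperplaneProj_of_mem X hw]

end Hyperplane

open Real

theorem hasDerivAt_smoothTransition (x : ℝ) :
    HasDerivAt smoothTransition (deriv smoothTransition x) x :=
  ((smoothTransition.contDiff (n := 1)).differentiable one_ne_zero x).hasDerivAt

theorem deriv_smoothTransition_of_nonpos {x : ℝ} (hx : x ≤ 0) : deriv smoothTransition x = 0 :=
  IsLocalMin.deriv_eq_zero <| .of_forall fun y => by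
    rw [smoothTransition.zero_of_nonpos hx]; exact smoothTransition.nonneg y

theorem deriv_smoothTransition_of_one_le {x : ℝ} (hx : 1 ≤ x) : deriv smoothTransition x = 0 :=
  IsLocalMax.deriv_eq_zero <| .of_forall fun y => by
    rw [smoothTransition.one_of_one_le hx]; exact smoothTransition.le_one y

section StepPath

variable {α : Type*} [DecidableEq α] {m : ℕ} {j : ℕ → α} {a : ℕ → ℝ}

/-- Moves by `a k` along the `j k`-th axis during `[k, k + 1]` for `k < m`; the final rest on
`[m, m + 1]` keeps the time horizon positive when `m = 0`. -/
noncomputable def stepPath (m : ℕ) (j : ℕ → α) (a : ℕ → ℝ) : RawPath α :=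
  ⟨m + 1, fun t i => ∑ k ∈ range m, (if j k = i then a k else 0) * smoothTransition (t - k)⟩

theorem stepPath_toFun (t : ℝ) (i : α) : (stepPath m j a).toFun t i =
    ∑ k ∈ range m, (if j k = i then a k else 0) * smoothTransition (t - k) := rfl

theorem contDiff_stepPath (i : α) : ContDiff ℝ 1 fun t => (stepPath m j a).toFun t i := by
  simp only [stepPath_toFun]
  exact ContDiff.sum fun _ _ => contDiff_const.mul (smoothTransition.contDiff.comp
    (contDiff_id.sub contDiff_const))

theorem hasDerivAt_stepPath (i : α) (t : ℝ) :
    HasDerivAt (fun t => (stepPath m j a).toFun t i)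
      (∑ k ∈ range m, (if j k = i then a k else 0) * deriv smoothTransition (t - k)) t := by
  simp only [stepPath_toFun]
  exact HasDerivAt.fun_sum fun k _ =>
    ((hasDerivAt_smoothTransition _).comp_sub_const t k).const_mul _

theorem deriv_stepPath_of_mem_Icc (ha : ∀ k, m ≤ k → a k = 0) (i : α) {k : ℕ} {s : ℝ}
    (hs : s ∈ Icc (k : ℝ) (k + 1)) :
    deriv (fun t => (stepPath m j a).toFun t i) s =
      (if j k = i then a k else 0) * deriv smoothTransition (s - k) := by
  rw [(hasDerivAt_stepPath i s).deriv]
  have hother : ∀ l ≠ k, (if j l = i then a l else 0) * deriv smoothTransition (s - l) = 0 := by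
    intro l hl
    rcases hl.lt_or_gt with hlk | hkl
    · have : (l : ℝ) + 1 ≤ k := by exact_mod_cast hlk
      rw [deriv_smoothTransition_of_one_le (by linarith [hs.1]), mul_zero]
    · have : (k : ℝ) + 1 ≤ l := by exact_mod_cast hkl
      rw [deriv_smoothTransition_of_nonpos (by linarith [hs.2]), mul_zero]
  by_cases hk : k < m
  · exact sum_eq_single_of_mem k (mem_range.mpr hk) fun l _ => hother l
  · rw [sum_eq_zero fun l hl => hother l (by rintro rfl; exact hk (mem_range.mp hl)),
      ha k (not_lt.mp hk), ite_self, zero_mul]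

theorem isPath_stepPath : IsPath (stepPath m j a) := by
  refine ⟨(by positivity : (0 : ℝ) < m + 1),
    fun i => (contDiff_stepPath i).continuous.continuousOn, 1, ![0, (m : ℝ) + 1], ?_, rfl, rfl,
    fun _ i => (contDiff_stepPath i).contDiffOn⟩
  refine Fin.strictMono_iff_lt_succ.mpr fun i => ?_
  fin_cases i
  show (0 : ℝ) < m + 1
  positivity

theorem stepPath_toFun_eq_zero {c : α} (hj : ∀ k < m, j k ≠ c) (t : ℝ) :
    (stepPath m j a).toFun t c = 0 :=
  (stepPath_toFun t c).trans <| sum_eq_zero fun k hk => by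
    rw [if_neg (hj k (mem_range.mp hk)), zero_mul]

end StepPath

section ExpProd

variable {α R S : Type*} [DecidableEq α] [CommSemiring R] [Algebra ℝ R] [CommSemiring S]
  [Algebra ℝ S]

/-- Writing `E u` for the pairing of a tensor series with `u.reverse`, `expStep j c E u` is the
pairing of `E ⊗ exp(c • j)` with `u.reverse`: the factor `exp(c • j)` absorbs a block `j ^ r`
at the end of `u.reverse`, with weight `c ^ r / r!`. -/
noncomputable def expStep (j : α) (c : R) (E : Word α → R) (u : Word α) : R :=
  ∑ r ∈ range (u.length + 1),
    if u.take r = List.replicate r j then (r.factorial : ℝ)⁻¹ • (c ^ r * E (u.drop r)) else 0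

/-- The pairing of `exp(a 0 • j 0) ⊗ ⋯ ⊗ exp(a (k - 1) • j (k - 1))` with `u.reverse`. -/
noncomputable def expProd (j : ℕ → α) (a : ℕ → R) : ℕ → Word α → R
  | 0, u => if u = [] then 1 else 0
  | k + 1, u => expStep (j k) (a k) (expProd j a k) u

theorem expStep_nil (j : α) (c : R) (E : Word α → R) : expStep j c E [] = E [] := by
  simp [expStep]

theorem expStep_zero (j : α) (E : Word α → R) : expStep j 0 E = E := by
  funext u
  simp [expStep, sum_range_succ']

theorem map_expStep (f : R →ₐ[ℝ] S) (j : α) (c : R) (E : Word α → R) (u : Word α) :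
    f (expStep j c E u) = expStep j (f c) (f ∘ E) u := by
  simp [expStep, apply_ite f]

theorem expProd_nil (j : ℕ → α) (a : ℕ → R) : ∀ k, expProd j a k [] = 1
  | 0 => rfl
  | k + 1 => by rw [expProd, expStep_nil, expProd_nil j a k]

theorem map_expProd (f : R →ₐ[ℝ] S) (j : ℕ → α) (a : ℕ → R) :
    ∀ k u, f (expProd j a k u) = expProd j (f ∘ a) k u
  | 0, u => by simp [expProd, apply_ite f]
  | k + 1, u => by
    rw [expProd, expProd, map_expStep]
    congr 1
    exact funext (map_expProd f j a k)

theorem expProd_congr (j : ℕ → α) {a b : ℕ → R} :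
    ∀ {k}, (∀ i < k, a i = b i) → expProd j a k = expProd j b k
  | 0, _ => rfl
  | k + 1, h => by
    funext u
    rw [expProd, expProd, h k k.lt_succ_self,
      expProd_congr j fun i hi => h i (hi.trans k.lt_succ_self)]

theorem hasDerivAt_expStep_cons (j i : α) (E : Word α → ℝ) (u : Word α) (c : ℝ) :
    HasDerivAt (fun c => expStep j c E (i :: u)) (if j = i then expStep j c E u else 0) c := by
  have hterm (r : ℕ) (e : ℝ) :
      HasDerivAt (fun c => ((r + 1).factorial : ℝ)⁻¹ • (c ^ (r + 1) * e))
        ((r.factorial : ℝ)⁻¹ • (c ^ r * e)) c := by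
    refine (((hasDerivAt_pow (r + 1) c).mul_const e).const_smul
      ((r + 1).factorial : ℝ)⁻¹).congr_deriv ?_
    rw [Nat.factorial_succ, smul_eq_mul, smul_eq_mul]
    push_cast
    field_simp
  have hsum : HasDerivAt (fun c => ∑ r ∈ range (u.length + 1),
      if i = j ∧ u.take r = List.replicate r j then
        ((r + 1).factorial : ℝ)⁻¹ • (c ^ (r + 1) * E (u.drop r)) else 0)
      (∑ r ∈ range (u.length + 1), if i = j ∧ u.take r = List.replicate r j then
        (r.factorial : ℝ)⁻¹ • (c ^ r * E (u.drop r)) else 0) c := by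
    refine HasDerivAt.fun_sum fun r _ => ?_
    by_cases h : i = j ∧ u.take r = List.replicate r j
    · simpa only [h, and_self, if_true] using hterm r _
    · simpa only [h, if_false] using hasDerivAt_const c (0 : ℝ)
  simp only [expStep, List.length_cons, sum_range_succ' _ (u.length + 1), List.take_succ_cons,
    List.replicate_succ, List.cons.injEq, List.drop_succ_cons, List.take_zero,
    List.replicate_zero, List.drop_zero, pow_zero, one_mul]
  refine (hsum.add_const _).congr_deriv ?_
  by_cases h : j = i
  · simp [h]
  · simp [h, Ne.symm h]

end ExpProd

section StepPathSignature

variable {α : Type*} [DecidableEq α] {m : ℕ} {j : ℕ → α} {a : ℕ → ℝ}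

theorem continuous_deriv_stepPath (i : α) :
    Continuous (deriv fun t => (stepPath m j a).toFun t i) :=
  (contDiff_stepPath i).continuous_deriv le_rfl

/-- Chen's relation on the `k`-th step: during `[k, k + 1]` the signature is multiplied by
`exp(a k • smoothTransition (t - k) • j k)`. -/
theorem sigRev_stepPath_of_mem_Icc (ha : ∀ k, m ≤ k → a k = 0) {k : ℕ}
    (hk : ∀ u, sigRev (stepPath m j a).toFun u k = expProd j a k u) :
    ∀ u, ∀ t ∈ Icc (k : ℝ) (k + 1), sigRev (stepPath m j a).toFun u t =
      expStep (j k) (a k * smoothTransition (t - k)) (expProd j a k) u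
  | [], t, _ => by rw [expStep_nil, expProd_nil]; rfl
  | i :: u, t, ht => by
    set Y := (stepPath m j a).toFun
    set f := fun s : ℝ => expStep (j k) (a k * smoothTransition (s - k)) (expProd j a k) (i :: u)
    have hint : Continuous fun s => sigRev Y u s * deriv (fun t => Y t i) s :=
      (continuous_sigRev continuous_deriv_stepPath u).mul (continuous_deriv_stepPath i)
    have hderiv : ∀ s ∈ uIcc (k : ℝ) t,
        HasDerivAt f (sigRev Y u s * deriv (fun t => Y t i) s) s := by
      intro s hs
      rw [uIcc_of_le ht.1] at hs
      have hs' : s ∈ Icc (k : ℝ) (k + 1) := ⟨hs.1, hs.2.trans ht.2⟩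
      rw [sigRev_stepPath_of_mem_Icc ha hk u s hs', deriv_stepPath_of_mem_Icc ha i hs']
      have hstep := ((hasDerivAt_smoothTransition (s - k)).comp_sub_const s k).const_mul (a k)
      refine ((hasDerivAt_expStep_cons _ _ _ _ _).comp s hstep).congr_deriv ?_
      split_ifs <;> ring
    have hFTC := intervalIntegral.integral_eq_sub_of_hasDerivAt hderiv (hint.intervalIntegrable _ _)
    rw [← intervalIntegral.integral_interval_sub_left (hint.intervalIntegrable 0 t)
      (hint.intervalIntegrable 0 k)] at hFTC
    have hfk : f k = sigRev Y (i :: u) k := by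
      simp only [f, sub_self, smoothTransition.zero, mul_zero, expStep_zero, hk]
    rw [sigRev] at hfk ⊢
    linarith

theorem sigRev_stepPath_natCast (ha : ∀ k, m ≤ k → a k = 0) :
    ∀ k : ℕ, ∀ u, sigRev (stepPath m j a).toFun u k = expProd j a k u
  | 0, [] => rfl
  | 0, i :: u => by simp [sigRev, expProd]
  | k + 1, u => by
    have h := sigRev_stepPath_of_mem_Icc ha (sigRev_stepPath_natCast ha k) u (k + 1)
      ⟨by linarith, le_rfl⟩
    push_cast
    rw [h, add_sub_cancel_left, smoothTransition.one, mul_one]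
    rfl

theorem sig_stepPath (m : ℕ) (j : ℕ → α) (a : ℕ → ℝ) (w : Word α) :
    sig (stepPath m j a) w = expProd j a m w.reverse := by
  set a' : ℕ → ℝ := fun k => if k < m then a k else 0
  have hpath : stepPath m j a = stepPath m j a' := by
    simp only [stepPath, RawPath.mk.injEq, true_and]
    funext t i
    exact sum_congr rfl fun k hk => by simp [a', mem_range.mp hk]
  have hT : (stepPath m j a').T = ((m + 1 : ℕ) : ℝ) := by push_cast; rfl
  rw [hpath, sig, sigUpTo, hT, sigRev_stepPath_natCast fun k hk => if_neg (not_lt.mpr hk),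
    expProd, if_neg (lt_irrefl m), expStep_zero]
  exact congrFun (expProd_congr j fun i hi => if_pos hi) _

end StepPathSignature

section Coefficients

open MvPolynomial

theorem coeff_eq_zero_of_mem_supported {σ R : Type*} [CommSemiring R]
    {p : MvPolynomial σ R} {s : Set σ} (hp : p ∈ supported R s) {ν : σ →₀ ℕ} {i : σ}
    (hi : i ∉ s) (hν : ν i ≠ 0) : coeff ν p = 0 := by
  by_contra h
  exact hi (mem_supported.mp hp ((mem_vars_iff_mem_support i).mpr ⟨ν, mem_support_iff.mpr h,
    Finsupp.mem_support_iff.mpr hν⟩))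

theorem coeff_add_single_X_pow_mul {k : ℕ} {p : MvPolynomial ℕ ℝ} (hp : p ∈ supported ℝ (Iio k))
    {ν : ℕ →₀ ℕ} (hν : ν k = 0) (r : ℕ) :
    coeff (ν + Finsupp.single k 1) (X k ^ r * p) = if r = 1 then coeff ν p else 0 := by
  rw [X_pow_eq_monomial, coeff_monomial_mul']
  rcases Nat.lt_trichotomy r 1 with hr | rfl | hr
  · obtain rfl : r = 0 := Nat.lt_one_iff.mp hr
    simp only [Finsupp.single_zero, zero_le, if_true, tsub_zero, one_mul, zero_ne_one, if_false]
    exact coeff_eq_zero_of_mem_supported hp (lt_irrefl k) (by simp)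
  · simp
  · have : ¬Finsupp.single k r ≤ ν + Finsupp.single k 1 := fun h => by
      have := Finsupp.single_le_iff.mp h
      simp only [Finsupp.add_apply, hν, Finsupp.single_eq_same, zero_add] at this
      omega
    simp [this, hr.ne']

variable {α : Type*} [DecidableEq α] (j : ℕ → α)

theorem expProd_X_mem_supported :
    ∀ k u, expProd j (X : ℕ → MvPolynomial ℕ ℝ) k u ∈ supported ℝ (Iio k)
  | 0, u => by
    rw [expProd]
    split_ifs
    exacts [one_mem _, zero_mem _]
  | k + 1, u => by
    rw [expProd, expStep]
    refine Subalgebra.sum_mem _ fun r _ => ?_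
    split_ifs
    · have hX : (X k : MvPolynomial ℕ ℝ) ∈ supported ℝ (Iio (k + 1)) :=
        X_mem_supported.mpr k.lt_succ_self
      have hE : expProd j X k (u.drop r) ∈ supported ℝ (Iio (k + 1)) :=
        supported_mono (Set.Iio_subset_Iio k.le_succ) (expProd_X_mem_supported k _)
      exact Subalgebra.smul_mem _ (mul_mem (pow_mem hX r) hE) _
    · exact zero_mem _

/-- The coefficient of `X 0 * ⋯ * X (k - 1)` picks out the word `j 0 ⋯ j (k - 1)`, which
uses exactly one letter from each exponential factor. -/
theorem coeff_expProd_X : ∀ k u,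
    coeff (∑ i ∈ range k, Finsupp.single i 1) (expProd j (X : ℕ → MvPolynomial ℕ ℝ) k u) =
      if u = ((List.range k).map j).reverse then 1 else 0
  | 0, u => by
    rw [expProd]
    split_ifs <;> simp_all
  | k + 1, u => by
    have hν : (∑ i ∈ range k, Finsupp.single i 1 : ℕ →₀ ℕ) k = 0 := by
      simp [Finsupp.finsetSum_apply, Finsupp.single_apply]
    rw [sum_range_succ, expProd, expStep, coeff_sum]
    simp only [coeff_smul, apply_ite (coeff _), coeff_zero,
      coeff_add_single_X_pow_mul (expProd_X_mem_supported j k _) hν]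
    rcases u with _ | ⟨i, u⟩
    · simp
    · rw [sum_eq_single 1 (by simp +contextual) (by simp)]
      simp [coeff_expProd_X k u, List.range_succ, ite_and]

end Coefficients

section Ideal

open MvPolynomial

variable {α : Type*} [DecidableEq α]

/-- `⟨σ(stepPath m j v), x⟩` as a polynomial in the amounts `v`. -/
noncomputable def stepSigPoly (m : ℕ) (j : ℕ → α) : TA α →ₗ[ℝ] MvPolynomial ℕ ℝ :=
  Finsupp.linearCombination ℝ fun w => expProd j X m w.reverse

theorem eval_stepSigPoly (m : ℕ) (j : ℕ → α) (x : TA α) (v : ℕ → ℝ) :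
    eval v (stepSigPoly m j x) = Finsupp.linearCombination ℝ (sig (stepPath m j v)) x := by
  change (aeval v).toLinearMap (stepSigPoly m j x) = _
  rw [stepSigPoly, Finsupp.apply_linearCombination]
  congr 2 with w
  rw [Function.comp_apply, AlgHom.toLinearMap_apply, map_expProd, sig_stepPath,
    show ⇑(aeval v) ∘ X = v from funext (aeval_X v)]

theorem coeff_stepSigPoly (m : ℕ) (j : ℕ → α) (x : TA α) :
    coeff (∑ i ∈ range m, Finsupp.single i 1) (stepSigPoly m j x) = x ((List.range m).map j) := by
  rw [← lcoeff_apply, stepSigPoly, Finsupp.apply_linearCombination]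
  simp [Function.comp_def, coeff_expProd_X, Finsupp.linearCombination_apply, Finsupp.sum,
    eq_comm (b := x _)]

theorem Idl_hyperplane_le_span (c : α) :
    Idl {Y : RawPath α | IsPath Y ∧ ∀ t ∈ Icc (0 : ℝ) Y.T, Y.toFun t c = 0} ≤
      Submodule.span ℝ {x : TA α | ∃ w : Word α, c ∈ w ∧ x = Finsupp.single w 1} := by
  intro x hx
  simp only [Idl, Submodule.mem_iInf, LinearMap.mem_ker] at hx
  have hspan : {x : TA α | ∃ w : Word α, c ∈ w ∧ x = Finsupp.single w 1} =
      (fun w => Finsupp.single w 1) '' {w | c ∈ w} := by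
    ext
    simp [eq_comm]
  rw [hspan, ← Finsupp.supported_eq_span_single, Finsupp.mem_supported]
  intro w₀ hw₀
  by_contra hc
  set j : ℕ → α := fun k => w₀.getD k c
  have hj : (List.range w₀.length).map j = w₀ :=
    List.ext_getElem (by simp) (by simp +contextual [j])
  have hjc : ∀ k < w₀.length, j k ≠ c := fun k hk hjk => hc <| by
    rw [← hj, ← hjk]
    exact List.mem_map_of_mem (List.mem_range.mpr hk)
  have hP : stepSigPoly w₀.length j x = 0 := MvPolynomial.funext fun v => by
    rw [map_zero, eval_stepSigPoly]
    exact hx _ ⟨isPath_stepPath, fun t _ => stepPath_toFun_eq_zero hjc t⟩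
  have hcoeff := coeff_stepSigPoly w₀.length j x
  rw [hP, coeff_zero, hj] at hcoeff
  exact Finsupp.mem_support_iff.mp hw₀ hcoeff.symm

theorem Idl_hyperplane (c : α) :
    Idl {Y : RawPath α | IsPath Y ∧ ∀ t ∈ Icc (0 : ℝ) Y.T, Y.toFun t c = 0} =
      Submodule.span ℝ {x : TA α | ∃ w : Word α, c ∈ w ∧ x = Finsupp.single w 1} :=
  le_antisymm (Idl_hyperplane_le_span c) (span_le_Idl_hyperplane c)

end Ideal

/-- For `d ≥ 2` and a path `X` in `ℝ^d` (letter `1` = index `0`),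
`⟨σ(X), w⟩ = 0` for all words `w` containing the letter `1` iff `σ(X) = σ(QX)` where
`Q` is the orthogonal projection onto the hyperplane `{x₁ = 0}`; moreover, the ideal
`ℐ` of the set of paths contained in that hyperplane is exactly the span of the words
containing the letter `1`. -/
theorem statement6 {d : ℕ} (hd : 2 ≤ d) (X : RawPath (Fin d)) :
    ((∀ w : Word (Fin d), (⟨0, by omega⟩ : Fin d) ∈ w → sig X w = 0) ↔
      (∀ w : Word (Fin d),
        sig X w =
          sig (⟨X.T, fun t i => if i = (⟨0, by omega⟩ : Fin d) then 0 else X.toFun t i⟩ :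
            RawPath (Fin d)) w)) ∧
    Idl {Y : RawPath (Fin d) | IsPath Y ∧
          ∀ t ∈ Set.Icc (0 : ℝ) Y.T, Y.toFun t (⟨0, by omega⟩ : Fin d) = 0} =
      Submodule.span ℝ {x : TA (Fin d) |
        ∃ w : Word (Fin d), (⟨0, by omega⟩ : Fin d) ∈ w ∧ x = Finsupp.single w 1} :=
  ⟨forall_sig_eq_zero_iff_sig_eq_sig_hyperplaneProj _ X, Idl_hyperplane _⟩

end PathVarieties
end
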